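/- Let b ∈ ℕ and let a_1,…,a_n ∈ ℕ ∪ {0} satisfy ∑_{k=1}^n a_k = b. Then there exist pairwise orthogonal projections P_1,…,P_n ∈ M_b(ℂ) with ∑ P_k = I_b such that every diagonal entry of P_k equals a_k/b. -/

import Mathlib

open Matrix Finset

/-!
Cut `Fin b` into blocks of sizes `a k` and let `Q k` be the diagonal projection onto the `k`-th
block; the `Q k` are orthogonal projections summing to `1`. Conjugation by a unitary is a
⋆-automorphism, so it preserves this, and for the normalised DFT matrix `U`, whose entries all
have modulus `1 / √b`, every diagonal entry of `U * Q k * Uᴴ` is the average `tr (Q k) / b = a k / b`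
of the diagonal of `Q k`.
-/

structure IsProjectionPartition {R ι : Type*} [Semiring R] [Star R] [Fintype ι] (P : ι → R) :
    Prop where
  isStarProjection : ∀ k, IsStarProjection (P k)
  mul_eq_zero : Pairwise fun j k => P j * P k = 0
  sum_eq_one : ∑ k, P k = 1

theorem IsProjectionPartition.map {R S ι F : Type*} [Semiring R] [Star R] [Semiring S] [Star S]
    [Fintype ι] [FunLike F R S] [RingHomClass F R S] [StarHomClass F R S]
    {P : ι → R} (hP : IsProjectionPartition P) (f : F) :
    IsProjectionPartition fun k => f (P k) where
  isStarProjection k := (hP.isStarProjection k).map f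
  mul_eq_zero j k hjk := by simp only [← map_mul, hP.mul_eq_zero hjk, map_zero]
  sum_eq_one := by rw [← map_sum, hP.sum_eq_one, map_one]

theorem isProjectionPartition_diagonal_fiber {m ι α : Type*} [Fintype m] [DecidableEq m]
    [Fintype ι] [DecidableEq ι] [Semiring α] [StarRing α] (f : m → ι) :
    IsProjectionPartition fun k => (diagonal fun i => if f i = k then 1 else 0 : Matrix m m α) where
  isStarProjection k := by
    rw [isStarProjection_iff', star_eq_conjTranspose, diagonal_mul_diagonal,
      diagonal_conjTranspose]
    constructor <;> congr 1 <;> ext i <;> by_cases h : f i = k <;> simp [h]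
  mul_eq_zero j k hjk := by
    simp only [diagonal_mul_diagonal, ← diagonal_zero]
    congr 1; ext i; split_ifs with h1 h2 <;> simp_all
  sum_eq_one := by
    ext i i'
    by_cases h : i = i' <;> simp [Matrix.sum_apply, one_apply, h]

theorem mul_diagonal_mul_star_apply_self_of_norm_sq_eq {𝕜 m : Type*} [RCLike 𝕜] [Fintype m]
    [DecidableEq m] {U : Matrix m m 𝕜} {i : m} {c : ℝ} (hU : ∀ j, ‖U i j‖ ^ 2 = c) (d : m → 𝕜) :
    (U * diagonal d * star U) i i = c * ∑ j, d j := by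
  simp only [mul_apply, star_apply, diagonal_apply, RCLike.star_def, mul_ite, mul_zero,
    Finset.sum_ite_eq', Finset.mem_univ, if_true, Finset.mul_sum]
  refine Finset.sum_congr rfl fun j _ => ?_
  rw [mul_right_comm, RCLike.mul_conj, ← RCLike.ofReal_pow, hU, mul_comm]

noncomputable def dftMatrix (N : ℕ) [NeZero N] : Matrix (ZMod N) (ZMod N) ℂ :=
  of fun j k => ZMod.stdAddChar (j * k)

theorem norm_dftMatrix_apply (N : ℕ) [NeZero N] (j k : ZMod N) : ‖dftMatrix N j k‖ = 1 :=
  AddChar.norm_apply ZMod.stdAddChar (j * k)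

theorem star_dftMatrix_mul_self (N : ℕ) [NeZero N] :
    star (dftMatrix N) * dftMatrix N = (N : ℂ) • 1 := by
  ext j k
  simp only [mul_apply, star_apply, dftMatrix, of_apply, RCLike.star_def]
  simp only [← AddChar.map_neg_eq_conj, ← AddChar.map_add_eq_mul, ← mul_neg, ← mul_add,
    neg_add_eq_sub, AddChar.sum_mulShift _ (ZMod.isPrimitive_stdAddChar N), ZMod.card, sub_eq_zero,
    eq_comm (a := k)]
  rw [Matrix.smul_apply, one_apply]
  split_ifs <;> simp

theorem submatrix_mem_unitaryGroup {m n α : Type*} [Fintype m] [Fintype n] [DecidableEq m]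
    [DecidableEq n] [CommRing α] [StarRing α] {U : Matrix n n α} (hU : U ∈ unitaryGroup n α)
    (e : m ≃ n) : U.submatrix e e ∈ unitaryGroup m α := by
  rw [mem_unitaryGroup_iff', star_eq_conjTranspose, conjTranspose_submatrix, submatrix_mul_equiv,
    ← star_eq_conjTranspose, mem_unitaryGroup_iff'.mp hU, submatrix_one_equiv]

theorem inv_sqrt_smul_dftMatrix_mem_unitaryGroup (N : ℕ) [NeZero N] :
    ((√N : ℝ) : ℂ)⁻¹ • dftMatrix N ∈ unitaryGroup (ZMod N) ℂ := by
  rw [mem_unitaryGroup_iff', star_smul, smul_mul_smul_comm, star_dftMatrix_mul_self, smul_smul]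
  convert one_smul ℂ (1 : Matrix (ZMod N) (ZMod N) ℂ)
  rw [← Complex.ofReal_inv, Complex.star_def, Complex.conj_ofReal, ← Complex.ofReal_mul, ← mul_inv,
    Real.mul_self_sqrt (Nat.cast_nonneg N), Complex.ofReal_inv, Complex.ofReal_natCast]
  exact inv_mul_cancel₀ (Nat.cast_ne_zero.mpr (NeZero.ne N))

theorem exists_mem_unitaryGroup_norm_sq_eq (m : Type*) [Fintype m] [DecidableEq m] :
    ∃ U ∈ unitaryGroup m ℂ, ∀ i j, ‖U i j‖ ^ 2 = (Fintype.card m : ℝ)⁻¹ := by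
  cases isEmpty_or_nonempty m
  · exact ⟨1, one_mem _, fun i => isEmptyElim i⟩
  set N := Fintype.card m
  have : NeZero N := ⟨Fintype.card_ne_zero⟩
  let e : m ≃ ZMod N := Fintype.equivOfCardEq (ZMod.card N).symm
  refine ⟨_, submatrix_mem_unitaryGroup (inv_sqrt_smul_dftMatrix_mem_unitaryGroup N) e,
    fun i j => ?_⟩
  simp [norm_dftMatrix_apply]

theorem exists_card_fiber_eq {α ι : Type*} [Fintype α] [Fintype ι] [DecidableEq ι] (a : ι → ℕ)
    (ha : ∑ k, a k = Fintype.card α) : ∃ f : α → ι, ∀ k, #{x | f x = k} = a k := by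
  let e : α ≃ Σ k, Fin (a k) := Fintype.equivOfCardEq (by simp [ha])
  refine ⟨fun x => (e x).1, fun k => ?_⟩
  rw [← Fintype.card_subtype,
    Fintype.card_congr (e.subtypeEquiv (q := fun s => s.1 = k) fun _ => Iff.rfl),
    Fintype.card_congr (Equiv.sigmaSubtype k), Fintype.card_fin]

theorem matrix_exact_constant_diagonal_general (n b : ℕ)
    (a : Fin n → ℕ) (ha : ∑ k, a k = b) :
    ∃ P : Fin n → Matrix (Fin b) (Fin b) ℂ,
      (∀ k, (P k)ᴴ = P k ∧ P k * P k = P k) ∧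
      (∀ j k, j ≠ k → P j * P k = 0) ∧
      (∑ k, P k = 1) ∧
      (∀ k, ∀ i : Fin b, P k i i = (a k : ℂ) / (b : ℂ)) := by
  obtain ⟨f, hf⟩ := exists_card_fiber_eq a (ha.trans (Fintype.card_fin b).symm)
  obtain ⟨U, hU, hU_norm⟩ := exists_mem_unitaryGroup_norm_sq_eq (Fin b)
  have hP := (isProjectionPartition_diagonal_fiber (α := ℂ) f).map
    (Unitary.conjStarAlgAut ℂ _ ⟨U, hU⟩)
  refine ⟨_, fun k => ⟨(hP.isStarProjection k).isSelfAdjoint,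
    (hP.isStarProjection k).isIdempotentElem⟩, fun _ _ hjk => hP.mul_eq_zero hjk, hP.sum_eq_one,
    fun k i => ?_⟩
  rw [Unitary.conjStarAlgAut_apply, mul_diagonal_mul_star_apply_self_of_norm_sq_eq (hU_norm i),
    Finset.sum_boole, hf]
  simp [div_eq_inv_mul]

/-- Exact carpenter lemma for rational data: if `∑ a k = b`, there exist
pairwise orthogonal projections `P k ∈ M_b(ℂ)` summing to the identity with
every diagonal entry of `P k` equal to `a k / b`. -/
theorem matrix_exact_constant_diagonal (n b : ℕ) (hb : 0 < b)
    (a : Fin n → ℕ) (ha : ∑ k, a k = b) :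
    ∃ P : Fin n → Matrix (Fin b) (Fin b) ℂ,
      (∀ k, (P k)ᴴ = P k ∧ P k * P k = P k) ∧
      (∀ j k, j ≠ k → P j * P k = 0) ∧
      (∑ k, P k = 1) ∧
      (∀ k, ∀ i : Fin b, P k i i = (a k : ℂ) / (b : ℂ)) :=
  matrix_exact_constant_diagonal_general n b a ha
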